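/- arXiv:2305.00796 — 3 statements merged into one kernel-verified Lean document; each statement's English description precedes it below -/
import Mathlib

section
/- Let S be a non-empty set of prime numbers. Then every breakpoint of every element of H(ℝ) whose pieces have matrices in SL₂(ℤ[1/S]) is a fixed point in ℝ of a hyperbolic element of SL₂(ℤ[1/S]). Consequently, the group Γ_S of piecewise-SL₂(ℤ[1/S]) homeomorphisms of the line coincides with the group H(ℤ[1/S]). -/
open Matrix Filter Topology MeasureTheory

noncomputable section

/-- The group of homeomorphisms of a topological space, under composition. -/
instance Homeomorph.instGroup' {X : Type*} [TopologicalSpace X] : Group (X ≃ₜ X) where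
  mul a b := b.trans a
  one := Homeomorph.refl X
  inv := Homeomorph.symm
  mul_assoc a b c := Homeomorph.ext fun _ => rfl
  one_mul a := Homeomorph.ext fun _ => rfl
  mul_one a := Homeomorph.ext fun _ => rfl
  inv_mul_cancel a := Homeomorph.ext fun x => a.symm_apply_apply x

@[simp] lemma Homeomorph.mul_apply' {X : Type*} [TopologicalSpace X]
    (a b : X ≃ₜ X) (x : X) : (a * b) x = a (b x) := rfl

@[simp] lemma Homeomorph.inv_coe {X : Type*} [TopologicalSpace X]
    (a : X ≃ₜ X) : (a⁻¹ : X ≃ₜ X) = a.symm := rfl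

abbrev SL2 (R : Type*) [CommRing R] := Matrix.SpecialLinearGroup (Fin 2) R

namespace PP

/-- Denominator of the Möbius transformation attached to `g`. -/
def mdenom (g : SL2 ℝ) (x : ℝ) : ℝ := g.1 1 0 * x + g.1 1 1

/-- The Möbius transformation attached to `g`. -/
def moebius (g : SL2 ℝ) (x : ℝ) : ℝ := (g.1 0 0 * x + g.1 0 1) / (g.1 1 0 * x + g.1 1 1)

/-- `g` is a local (projective) piece of the homeomorphism `h` at the point `x`. -/
def IsLocalPiece (h : ℝ ≃ₜ ℝ) (g : SL2 ℝ) (x : ℝ) : Prop :=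
  mdenom g x ≠ 0 ∧ ∀ᶠ y in 𝓝 x, h y = moebius g y

/-- `h` is piecewise given by Möbius transformations of matrices in `M`:
outside of a finite set of breakpoints, `h` is locally a Möbius map from `M`. -/
def IsPiecewiseIn (M : Set (SL2 ℝ)) (h : ℝ ≃ₜ ℝ) : Prop :=
  ∃ B : Finset ℝ, ∀ x ∉ B, ∃ g ∈ M, IsLocalPiece h g x

/-- A breakpoint of `h` : a point where `h` is not locally projective. -/
def IsBreakpoint (h : ℝ ≃ₜ ℝ) (x : ℝ) : Prop := ¬ ∃ g : SL2 ℝ, IsLocalPiece h g x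

/-- Matrices with entries in the subring `A`. -/
def entriesIn (A : Subring ℝ) : Set (SL2 ℝ) := {g | ∀ i j, g.1 i j ∈ A}

lemma one_entriesIn (A : Subring ℝ) : (1 : SL2 ℝ) ∈ entriesIn A := by
  intro i j
  by_cases h : i = j <;>
    simp [entriesIn, Matrix.SpecialLinearGroup.coe_one, Matrix.one_apply, h, A.one_mem, A.zero_mem]

lemma mul_entriesIn {A : Subring ℝ} {g₁ g₂ : SL2 ℝ} (h₁ : g₁ ∈ entriesIn A)
    (h₂ : g₂ ∈ entriesIn A) : g₁ * g₂ ∈ entriesIn A := by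
  intro i j
  rw [Matrix.SpecialLinearGroup.coe_mul, Matrix.mul_apply]
  exact Subring.sum_mem A fun k _ => A.mul_mem (h₁ i k) (h₂ k j)

lemma inv_entriesIn {A : Subring ℝ} {g : SL2 ℝ} (h : g ∈ entriesIn A) :
    g⁻¹ ∈ entriesIn A := by
  intro i j
  have : (g⁻¹ : SL2 ℝ).1 = (g.1).adjugate := Matrix.SpecialLinearGroup.coe_inv g
  rw [this, Matrix.adjugate_fin_two]
  fin_cases i <;> fin_cases j <;>
    simp [Matrix.cons_val_zero, Matrix.cons_val_one] <;>
    first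
      | exact h 1 1
      | exact h 0 1
      | exact h 1 0
      | exact A.neg_mem (h 0 1)
      | exact A.neg_mem (h 1 0)
      | exact h 0 0

lemma det_eq (g : SL2 ℝ) : g.1 0 0 * g.1 1 1 - g.1 0 1 * g.1 1 0 = 1 := by
  have := g.2
  rwa [Matrix.det_fin_two] at this

/-- Composition of Möbius transformations (denominator part). -/
lemma mdenom_mul (g₁ g₂ : SL2 ℝ) (x : ℝ) (h₂ : mdenom g₂ x ≠ 0) :
    mdenom (g₁ * g₂) x = mdenom g₁ (moebius g₂ x) * mdenom g₂ x := by
  unfold mdenom moebius at *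
  rw [Matrix.SpecialLinearGroup.coe_mul, Matrix.mul_apply, Matrix.mul_apply, Fin.sum_univ_two,
    Fin.sum_univ_two]
  field_simp
  ring

lemma mdenom_mul_ne (g₁ g₂ : SL2 ℝ) (x : ℝ) (h₂ : mdenom g₂ x ≠ 0)
    (h₁ : mdenom g₁ (moebius g₂ x) ≠ 0) : mdenom (g₁ * g₂) x ≠ 0 := by
  rw [mdenom_mul g₁ g₂ x h₂]; exact mul_ne_zero h₁ h₂

lemma moebius_mul (g₁ g₂ : SL2 ℝ) (x : ℝ) (h₂ : mdenom g₂ x ≠ 0)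
    (h₁ : mdenom g₁ (moebius g₂ x) ≠ 0) :
    moebius (g₁ * g₂) x = moebius g₁ (moebius g₂ x) := by
  have hden := mdenom_mul_ne g₁ g₂ x h₂ h₁
  unfold mdenom moebius at *
  simp only [Matrix.SpecialLinearGroup.coe_mul, Matrix.mul_apply, Fin.sum_univ_two] at *
  rw [div_eq_div_iff hden h₁]
  field_simp
  ring

lemma inv_entry_00 (g : SL2 ℝ) : (g⁻¹ : SL2 ℝ).1 0 0 = g.1 1 1 := by
  simp [Matrix.SpecialLinearGroup.coe_inv, Matrix.adjugate_fin_two]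
lemma inv_entry_01 (g : SL2 ℝ) : (g⁻¹ : SL2 ℝ).1 0 1 = -g.1 0 1 := by
  simp [Matrix.SpecialLinearGroup.coe_inv, Matrix.adjugate_fin_two]
lemma inv_entry_10 (g : SL2 ℝ) : (g⁻¹ : SL2 ℝ).1 1 0 = -g.1 1 0 := by
  simp [Matrix.SpecialLinearGroup.coe_inv, Matrix.adjugate_fin_two]
lemma inv_entry_11 (g : SL2 ℝ) : (g⁻¹ : SL2 ℝ).1 1 1 = g.1 0 0 := by
  simp [Matrix.SpecialLinearGroup.coe_inv, Matrix.adjugate_fin_two]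

lemma moebius_one (x : ℝ) : moebius 1 x = x := by
  unfold moebius
  simp [Matrix.SpecialLinearGroup.coe_one, Matrix.one_apply]

lemma mdenom_one (x : ℝ) : mdenom 1 x = 1 := by
  unfold mdenom
  simp [Matrix.SpecialLinearGroup.coe_one, Matrix.one_apply]

lemma mdenom_inv (g : SL2 ℝ) (x : ℝ) (h : mdenom g x ≠ 0) :
    mdenom g⁻¹ (moebius g x) = 1 / mdenom g x := by
  have hdet := det_eq g
  unfold mdenom moebius at *
  rw [inv_entry_10, inv_entry_11]
  field_simp
  linear_combination hdet

lemma moebius_inv (g : SL2 ℝ) (x : ℝ) (h : mdenom g x ≠ 0) :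
    mdenom g⁻¹ (moebius g x) ≠ 0 ∧ moebius g⁻¹ (moebius g x) = x := by
  have h1 : mdenom g⁻¹ (moebius g x) = 1 / mdenom g x := mdenom_inv g x h
  have hne : mdenom g⁻¹ (moebius g x) ≠ 0 := by rw [h1]; exact one_div_ne_zero h
  refine ⟨hne, ?_⟩
  rw [← moebius_mul g⁻¹ g x h hne, inv_mul_cancel, moebius_one]

lemma mdenom_continuous (g : SL2 ℝ) : Continuous (mdenom g) := by
  unfold mdenom; fun_prop

lemma eventually_mdenom_ne (g : SL2 ℝ) {x : ℝ} (h : mdenom g x ≠ 0) :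
    ∀ᶠ y in 𝓝 x, mdenom g y ≠ 0 :=
  (mdenom_continuous g).continuousAt.eventually_ne h

lemma IsLocalPiece.mul {a b : ℝ ≃ₜ ℝ} {g₁ g₂ : SL2 ℝ} {x : ℝ}
    (h₁ : IsLocalPiece a g₁ (b x)) (h₂ : IsLocalPiece b g₂ x) :
    IsLocalPiece (a * b) (g₁ * g₂) x := by
  obtain ⟨d₂, e₂⟩ := h₂
  obtain ⟨d₁, e₁⟩ := h₁
  have hbx : b x = moebius g₂ x := e₂.self_of_nhds
  have d₁' : mdenom g₁ (moebius g₂ x) ≠ 0 := hbx ▸ d₁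
  refine ⟨mdenom_mul_ne g₁ g₂ x d₂ d₁', ?_⟩
  have hmap : ∀ᶠ y in 𝓝 x, a (b y) = moebius g₁ (b y) := by
    have hb : Filter.map b (𝓝 x) = 𝓝 (b x) := b.map_nhds_eq x
    rw [← hb] at e₁
    exact e₁
  have hd1ev : ∀ᶠ y in 𝓝 x, mdenom g₁ (b y) ≠ 0 := by
    have hb : Filter.map b (𝓝 x) = 𝓝 (b x) := b.map_nhds_eq x
    have := eventually_mdenom_ne g₁ d₁
    rw [← hb] at this
    exact this
  filter_upwards [e₂, hmap, hd1ev, eventually_mdenom_ne g₂ d₂] with y hy₂ hy₁ hyd₁ hyd₂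
  have hyd₁' : mdenom g₁ (moebius g₂ y) ≠ 0 := by rw [← hy₂]; exact hyd₁
  calc (a * b) y = a (b y) := rfl
    _ = moebius g₁ (b y) := hy₁
    _ = moebius g₁ (moebius g₂ y) := by rw [hy₂]
    _ = moebius (g₁ * g₂) y := (moebius_mul g₁ g₂ y hyd₂ hyd₁').symm

lemma IsLocalPiece.inv {h : ℝ ≃ₜ ℝ} {g : SL2 ℝ} {x : ℝ} (hp : IsLocalPiece h g x) :
    IsLocalPiece h⁻¹ g⁻¹ (h x) := by
  obtain ⟨d, e⟩ := hp
  have hx : h x = moebius g x := e.self_of_nhds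
  refine ⟨by rw [hx]; exact (moebius_inv g x d).1, ?_⟩
  have hb : Filter.map h (𝓝 x) = 𝓝 (h x) := h.map_nhds_eq x
  rw [← hb, Filter.eventually_map]
  filter_upwards [e, eventually_mdenom_ne g d] with y hy hyd
  calc (h⁻¹ : ℝ ≃ₜ ℝ) (h y) = y := h.symm_apply_apply y
    _ = moebius g⁻¹ (h y) := by rw [hy]; exact ((moebius_inv g y hyd).2).symm

lemma isLocalPiece_one (x : ℝ) : IsLocalPiece 1 1 x := by
  refine ⟨by rw [mdenom_one]; exact one_ne_zero, ?_⟩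
  filter_upwards with y
  rw [moebius_one]
  rfl

/-- The group of piecewise-`SL₂(A)` homeomorphisms of the real line. -/
def PW (A : Subring ℝ) : Subgroup (ℝ ≃ₜ ℝ) where
  carrier := {h | IsPiecewiseIn (entriesIn A) h}
  one_mem' := ⟨∅, fun x _ => ⟨1, one_entriesIn A, isLocalPiece_one x⟩⟩
  mul_mem' := by
    rintro a b ⟨Ba, hBa⟩ ⟨Bb, hBb⟩
    refine ⟨Bb ∪ Ba.image b.symm, fun x hx => ?_⟩
    rw [Finset.mem_union, not_or] at hx
    obtain ⟨hxb, hxa⟩ := hx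
    obtain ⟨g₂, hg₂A, hg₂⟩ := hBb x hxb
    have hbx : b x ∉ Ba := by
      intro hmem
      exact hxa (Finset.mem_image.2 ⟨b x, hmem, b.symm_apply_apply x⟩)
    obtain ⟨g₁, hg₁A, hg₁⟩ := hBa (b x) hbx
    exact ⟨g₁ * g₂, mul_entriesIn hg₁A hg₂A, hg₁.mul hg₂⟩
  inv_mem' := by
    rintro h ⟨B, hB⟩
    refine ⟨B.image h, fun y hy => ?_⟩
    have hxB : h.symm y ∉ B := by
      intro hmem
      exact hy (Finset.mem_image.2 ⟨h.symm y, hmem, h.apply_symm_apply y⟩)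
    obtain ⟨g, hgA, hg⟩ := hB (h.symm y) hxB
    have := hg.inv
    rw [h.apply_symm_apply y] at this
    exact ⟨g⁻¹, inv_entriesIn hgA, this⟩

/-- Real fixed points of hyperbolic elements of `SL₂(A)`. -/
def FixHyp (A : Subring ℝ) : Set ℝ :=
  {x | ∃ g : SL2 ℝ, g ∈ entriesIn A ∧ |Matrix.trace g.1| > 2 ∧
        mdenom g x ≠ 0 ∧ moebius g x = x}

lemma trace_conj (g q : SL2 ℝ) :
    Matrix.trace ((g⁻¹ * q * g : SL2 ℝ) : Matrix (Fin 2) (Fin 2) ℝ) = Matrix.trace q.1 := by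
  rw [Matrix.SpecialLinearGroup.coe_mul, Matrix.SpecialLinearGroup.coe_mul,
    Matrix.trace_mul_comm, ← Matrix.mul_assoc, ← Matrix.SpecialLinearGroup.coe_mul,
    mul_inv_cancel, Matrix.SpecialLinearGroup.coe_one, Matrix.one_mul]

lemma FixHyp.conj {A : Subring ℝ} {g : SL2 ℝ} {x : ℝ} (hgA : g ∈ entriesIn A)
    (hd : mdenom g x ≠ 0) (hfix : moebius g x ∈ FixHyp A) : x ∈ FixHyp A := by
  obtain ⟨q, hqA, hqtr, hqd, hqfix⟩ := hfix
  refine ⟨g⁻¹ * q * g, mul_entriesIn (mul_entriesIn (inv_entriesIn hgA) hqA) hgA,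
    by rw [trace_conj]; exact hqtr, ?_, ?_⟩
  all_goals
    have hden1 : mdenom (q * g) x ≠ 0 := mdenom_mul_ne q g x hd hqd
    have hmo1 : moebius (q * g) x = moebius g x := by
      rw [moebius_mul q g x hd hqd, hqfix]
    have hden2 : mdenom g⁻¹ (moebius (q * g) x) ≠ 0 := by
      rw [hmo1]; exact (moebius_inv g x hd).1
  · rw [mul_assoc]
    exact mdenom_mul_ne g⁻¹ (q * g) x hden1 hden2
  · rw [mul_assoc, moebius_mul g⁻¹ (q * g) x hden1 hden2, hmo1]
    exact (moebius_inv g x hd).2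

/-- `h` is locally an `SL₂(A)`-Möbius map away from the set `Φ`. -/
def LocallyIn (A : Subring ℝ) (Φ : Set ℝ) (h : ℝ ≃ₜ ℝ) : Prop :=
  ∀ x : ℝ, x ∉ Φ → ∃ g ∈ entriesIn A, IsLocalPiece h g x

/-- The complement of `Φ` is invariant under Möbius maps with entries in `A`. -/
def MoebiusInv (A : Subring ℝ) (Φ : Set ℝ) : Prop :=
  ∀ g ∈ entriesIn A, ∀ x : ℝ, mdenom g x ≠ 0 → x ∉ Φ → moebius g x ∉ Φ

lemma LocallyIn.mul {A : Subring ℝ} {Φ : Set ℝ} (hΦ : MoebiusInv A Φ) {a b : ℝ ≃ₜ ℝ}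
    (ha : LocallyIn A Φ a) (hb : LocallyIn A Φ b) : LocallyIn A Φ (a * b) := by
  intro x hx
  obtain ⟨g₂, hg₂A, hg₂⟩ := hb x hx
  have hbx : b x ∉ Φ := by
    have : b x = moebius g₂ x := hg₂.2.self_of_nhds
    rw [this]
    exact hΦ g₂ hg₂A x hg₂.1 hx
  obtain ⟨g₁, hg₁A, hg₁⟩ := ha (b x) hbx
  exact ⟨g₁ * g₂, mul_entriesIn hg₁A hg₂A, hg₁.mul hg₂⟩

/-- The group of piecewise-`SL₂(A)` homeomorphisms of the line all of whose
breakpoints lie in the set `Φ`. -/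
def BreakIn (A : Subring ℝ) (Φ : Set ℝ) (hΦ : MoebiusInv A Φ) : Subgroup (ℝ ≃ₜ ℝ) where
  carrier := {h | IsPiecewiseIn (entriesIn A) h ∧ LocallyIn A Φ h ∧ LocallyIn A Φ h⁻¹}
  one_mem' := by
    refine ⟨(PW A).one_mem', ?_, ?_⟩ <;>
      · intro x _
        exact ⟨1, one_entriesIn A, isLocalPiece_one x⟩
  mul_mem' := by
    rintro a b ⟨hapw, ha, ha'⟩ ⟨hbpw, hb, hb'⟩
    refine ⟨(PW A).mul_mem' hapw hbpw, LocallyIn.mul hΦ ha hb, ?_⟩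
    rw [_root_.mul_inv_rev]
    exact LocallyIn.mul hΦ hb' ha'
  inv_mem' := by
    rintro h ⟨hpw, h₁, h₂⟩
    refine ⟨(PW A).inv_mem' hpw, h₂, ?_⟩
    rw [inv_inv]
    exact h₁

lemma fixHyp_moebiusInv (A : Subring ℝ) : MoebiusInv A (FixHyp A) :=
  fun g hg x hd hx hmem => hx (FixHyp.conj hg hd hmem)

/-- The group `H(A)`: piecewise-`SL₂(A)` homeomorphisms of the line whose
breakpoints are fixed points of hyperbolic elements of `SL₂(A)`. -/
def HGroup (A : Subring ℝ) : Subgroup (ℝ ≃ₜ ℝ) := BreakIn A (FixHyp A) (fixHyp_moebiusInv A)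

/-- The ring `ℤ[1/S]` of `S`-integers, as a subring of `ℚ`. -/
def SIntQ (S : Set ℕ) : Subring ℚ := Subring.closure {x : ℚ | ∃ p ∈ S, x = (p : ℚ)⁻¹}

/-- The ring `ℤ[1/S]` of `S`-integers, as a subring of `ℝ`. -/
def SIntR (S : Set ℕ) : Subring ℝ := Subring.closure {x : ℝ | ∃ p ∈ S, x = (p : ℝ)⁻¹}

/-- The group `Γ_S` of piecewise-`SL₂(ℤ[1/S])` homeomorphisms of the line. -/
def Gamma (S : Set ℕ) : Subgroup (ℝ ≃ₜ ℝ) := PW (SIntR S)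

/-- `ℚ` as a subring of `ℝ`. -/
def ratSubring : Subring ℝ := (Rat.castHom ℝ).range

/-- `ℤ` as a subring of `ℝ`. -/
def intSubring : Subring ℝ := (Int.castRingHom ℝ).range

/-- The group `H(ℚ)` of piecewise-`SL₂(ℚ)` homeomorphisms of the line. -/
def HQ : Subgroup (ℝ ≃ₜ ℝ) := PW ratSubring

lemma ratSubring_div_mem {x y : ℝ} (hx : x ∈ ratSubring) (hy : y ∈ ratSubring) :
    x / y ∈ ratSubring := by
  obtain ⟨q, rfl⟩ := RingHom.mem_range.1 hx
  obtain ⟨r, rfl⟩ := RingHom.mem_range.1 hy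
  refine RingHom.mem_range.2 ⟨q / r, ?_⟩
  simp [Rat.cast_div]

lemma moebius_mem_rat {g : SL2 ℝ} (hg : g ∈ entriesIn ratSubring) {y : ℝ}
    (hy : y ∈ ratSubring) : moebius g y ∈ ratSubring := by
  unfold moebius
  exact ratSubring_div_mem
    (ratSubring.add_mem (ratSubring.mul_mem (hg 0 0) hy) (hg 0 1))
    (ratSubring.add_mem (ratSubring.mul_mem (hg 1 0) hy) (hg 1 1))

lemma rat_moebiusInv {A : Subring ℝ} (hA : A ≤ ratSubring) :
    MoebiusInv A (ratSubring : Set ℝ) := by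
  intro g hg x hd hx hmem
  apply hx
  have : moebius g⁻¹ (moebius g x) = x := (moebius_inv g x hd).2
  rw [← this]
  exact moebius_mem_rat (fun i j => hA (inv_entriesIn hg i j)) hmem

lemma intSubring_le_rat : intSubring ≤ ratSubring := by
  rintro x ⟨n, rfl⟩
  refine RingHom.mem_range.2 ⟨(n : ℚ), ?_⟩
  simp

/-- Thompson's group `F` realized as `H_ℚ(ℤ)`: piecewise-`SL₂(ℤ)` homeomorphisms
of the line with rational breakpoints. -/
def Thompson : Subgroup (ℝ ≃ₜ ℝ) :=
  BreakIn intSubring (ratSubring : Set ℝ) (rat_moebiusInv intSubring_le_rat)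

/-- The group `H_ℚ(ℚ)` of piecewise-`SL₂(ℚ)` homeomorphisms of the line with
rational breakpoints. -/
def HQrat : Subgroup (ℝ ≃ₜ ℝ) :=
  BreakIn ratSubring (ratSubring : Set ℝ) (rat_moebiusInv le_rfl)

/-- A bounded real-valued function. -/
def Bdd {X : Type*} (f : X → ℝ) : Prop := ∃ C, ∀ x, |f x| ≤ C

/-- A mean: a normalized positive linear functional on bounded functions. -/
structure MeanOn (X : Type*) where
  toFun : (X → ℝ) → ℝ
  add' : ∀ f g : X → ℝ, Bdd f → Bdd g → toFun (f + g) = toFun f + toFun g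
  smul' : ∀ (c : ℝ) (f : X → ℝ), Bdd f → toFun (c • f) = c * toFun f
  mono' : ∀ f g : X → ℝ, Bdd f → Bdd g → (∀ x, f x ≤ g x) → toFun f ≤ toFun g
  one' : toFun (fun _ => 1) = 1

/-- A subgroup `H ≤ G` is co-amenable in `G` if there is a `G`-invariant mean on `G/H`. -/
def CoAmenableIn {G : Type*} [Group G] (H : Subgroup G) : Prop :=
  ∃ m : MeanOn (G ⧸ H), ∀ (g : G) (f : (G ⧸ H) → ℝ), Bdd f →
    m.toFun (fun x => f (g • x)) = m.toFun f

end PP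

open PP

/-!
Around a breakpoint `x` of `h`, a connectedness argument gives a single piece `g₁` on a left
neighbourhood and `g₂` on a right one. Continuity of `h` forces both to be regular at `x` with
value `h x`, so `q = g₁⁻¹ g₂` fixes `x`, and `q ≠ ±1` because `x` is a breakpoint. If `q` is not
hyperbolic, the fixed-point equation `c x² + (d - a) x - b = 0` has discriminant
`(tr q)² - 4 ≤ 0`, so `x = (a - d) / (2c)` is rational. Every rational is a fixed point of a
hyperbolic element of `SL₂(ℤ[1/p])`: `0` is fixed by `diag(p, 1/p)`, and `SL₂(ℤ)` moves any
rational to `0`.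

For `Γ_S = H(ℤ[1/S])`: a point that is not a breakpoint has some local piece in `SL₂(ℝ)`; a
piece is determined up to sign by its germ, so it agrees with the `SL₂(ℤ[1/S])`-piece at a
nearby point that is not in the finite exceptional set.
-/

namespace PP

def EqUpToSign (g g' : SL2 ℝ) : Prop := g'.1 = g.1 ∨ g'.1 = -g.1

namespace EqUpToSign

variable {g g' : SL2 ℝ}

lemma moebius_eq (h : EqUpToSign g g') : moebius g' = moebius g := by
  funext z
  rcases h with h | h <;>
    simp only [moebius, h, Matrix.neg_apply, neg_mul, ← neg_add, neg_div_neg_eq]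

lemma mdenom_ne_zero (h : EqUpToSign g g') {z : ℝ} (hz : mdenom g z ≠ 0) : mdenom g' z ≠ 0 := by
  rcases h with h | h <;> simpa only [mdenom, h, Matrix.neg_apply, neg_mul, ← neg_add, neg_ne_zero]

lemma symm (h : EqUpToSign g g') : EqUpToSign g' g := by
  rcases h with h | h
  · exact Or.inl h.symm
  · exact Or.inr (by rw [h, neg_neg])

end EqUpToSign

lemma IsLocalPiece.of_eqUpToSign {h : ℝ ≃ₜ ℝ} {g g' : SL2 ℝ} {x : ℝ} (hp : IsLocalPiece h g x)
    (hg : EqUpToSign g g') : IsLocalPiece h g' x :=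
  ⟨hg.mdenom_ne_zero hp.1, hg.moebius_eq ▸ hp.2⟩

lemma eqUpToSign_of_inv_mul {g g' : SL2 ℝ} (h : (g⁻¹ * g').1 = 1 ∨ (g⁻¹ * g').1 = -1) :
    EqUpToSign g g' := by
  have hg' : g'.1 = g.1 * (g⁻¹ * g').1 := by
    rw [← Matrix.SpecialLinearGroup.coe_mul, mul_inv_cancel_left]
  rcases h with h | h <;> rw [h] at hg'
  · exact Or.inl (hg'.trans (mul_one _))
  · exact Or.inr (hg'.trans (mul_neg_one _))

lemma quadratic_eq_zero_of_moebius_eq_self {q : SL2 ℝ} {x : ℝ} (hd : mdenom q x ≠ 0)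
    (hfix : moebius q x = x) :
    q.1 1 0 * x ^ 2 + (q.1 1 1 - q.1 0 0) * x - q.1 0 1 = 0 := by
  rw [mdenom] at hd
  rw [moebius, div_eq_iff hd] at hfix
  linear_combination -hfix

lemma inv_mul_fixes_of_moebius_eq {g g' : SL2 ℝ} {z : ℝ} (hd : mdenom g z ≠ 0)
    (hd' : mdenom g' z ≠ 0) (he : moebius g z = moebius g' z) :
    mdenom (g⁻¹ * g') z ≠ 0 ∧ moebius (g⁻¹ * g') z = z := by
  obtain ⟨hinv_d, hinv⟩ := moebius_inv g z hd
  rw [he] at hinv_d hinv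
  exact ⟨mdenom_mul_ne _ _ _ hd' hinv_d, by rw [moebius_mul _ _ _ hd' hinv_d, hinv]⟩

lemma coe_eq_one_or_neg_one {q : SL2 ℝ} (hc : q.1 1 0 = 0) (hb : q.1 0 1 = 0)
    (had : q.1 0 0 = q.1 1 1) : q.1 = 1 ∨ q.1 = -1 := by
  have hsq : (q.1 0 0 - 1) * (q.1 0 0 + 1) = 0 := by
    linear_combination det_eq q + q.1 0 0 * had + q.1 1 0 * hb
  rw [Matrix.eta_fin_two q.1, Matrix.one_fin_two, hc, hb, ← had]
  rcases mul_eq_zero.1 hsq with ha | ha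
  · left; rw [sub_eq_zero.1 ha]
  · right; rw [eq_neg_of_add_eq_zero_left ha]; ext i j; fin_cases i <;> fin_cases j <;> simp

open Polynomial in
lemma coe_eq_one_or_neg_one_of_infinite {q : SL2 ℝ} {s : Set ℝ} (hs : s.Infinite)
    (hfix : ∀ x ∈ s, q.1 1 0 * x ^ 2 + (q.1 1 1 - q.1 0 0) * x - q.1 0 1 = 0) :
    q.1 = 1 ∨ q.1 = -1 := by
  set p : ℝ[X] := C (q.1 1 0) * X ^ 2 + C (q.1 1 1 - q.1 0 0) * X - C (q.1 0 1)
  have hp : p = 0 :=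
    eq_zero_of_infinite_isRoot p (hs.mono fun x hx => by simpa [p] using hfix x hx)
  have hc : q.1 1 0 = 0 := by simpa [p] using congrArg (coeff · 2) hp
  have hb : q.1 0 1 = 0 := by simpa [p] using congrArg (coeff · 0) hp
  have had : q.1 1 1 - q.1 0 0 = 0 := by simpa [p, coeff_X] using congrArg (coeff · 1) hp
  exact coe_eq_one_or_neg_one hc hb (sub_eq_zero.1 had).symm

lemma subsingleton_mdenom_eq_zero (g : SL2 ℝ) : {z | mdenom g z = 0}.Subsingleton := by
  intro z₁ h₁ z₂ h₂
  simp only [Set.mem_ofPred_eq, mdenom] at h₁ h₂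
  have hc : g.1 1 0 ≠ 0 := by
    intro hc
    have := det_eq g
    rw [hc, zero_mul, zero_add] at h₁
    rw [hc, h₁] at this
    norm_num at this
  have : g.1 1 0 * (z₁ - z₂) = 0 := by linear_combination h₁ - h₂
  exact sub_eq_zero.1 ((mul_eq_zero.1 this).resolve_left hc)

lemma eqUpToSign_of_eqOn {g g' : SL2 ℝ} {s : Set ℝ} (hs : s.Infinite)
    (h : Set.EqOn (moebius g) (moebius g') s) : EqUpToSign g g' := by
  have hpoles : ({z | mdenom g z = 0} ∪ {z | mdenom g' z = 0}).Finite :=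
    (subsingleton_mdenom_eq_zero g).finite.union (subsingleton_mdenom_eq_zero g').finite
  refine eqUpToSign_of_inv_mul (coe_eq_one_or_neg_one_of_infinite (hs.sdiff hpoles) ?_)
  rintro z ⟨hz, hzp⟩
  simp only [Set.mem_union, Set.mem_ofPred_eq, not_or] at hzp
  obtain ⟨hd, hfix⟩ := inv_mul_fixes_of_moebius_eq hzp.1 hzp.2 (h hz)
  exact quadratic_eq_zero_of_moebius_eq_self hd hfix

lemma IsLocalPiece.eqUpToSign {h : ℝ ≃ₜ ℝ} {g g' : SL2 ℝ} {x : ℝ} (hg : IsLocalPiece h g x)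
    (hg' : IsLocalPiece h g' x) : EqUpToSign g g' := by
  have e : ⇑h =ᶠ[𝓝 x] moebius g := hg.2
  have e' : ⇑h =ᶠ[𝓝 x] moebius g' := hg'.2
  obtain ⟨s, hs, hEq⟩ := (e.symm.trans e').exists_mem
  exact eqUpToSign_of_eqOn (infinite_of_mem_nhds x hs) hEq

lemma isOpen_setOf_isLocalPiece (h : ℝ ≃ₜ ℝ) (g : SL2 ℝ) : IsOpen {y | IsLocalPiece h g y} := by
  refine isOpen_iff_mem_nhds.2 fun y ⟨hd, he⟩ => ?_
  filter_upwards [eventually_mdenom_ne g hd, he.eventually_nhds] with z hzd hze using ⟨hzd, hze⟩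

lemma IsPreconnected.exists_isLocalPiece {M : Set (SL2 ℝ)} {h : ℝ ≃ₜ ℝ} {s : Set ℝ}
    (hs : IsPreconnected s) (hne : s.Nonempty) (hpiece : ∀ y ∈ s, ∃ g ∈ M, IsLocalPiece h g y) :
    ∃ g ∈ M, ∀ y ∈ s, IsLocalPiece h g y := by
  obtain ⟨y₀, hy₀⟩ := hne
  obtain ⟨g, hgM, hg⟩ := hpiece y₀ hy₀
  set V := ⋃ g' ∈ {g' | ¬ EqUpToSign g g'}, {y | IsLocalPiece h g' y}
  have hV : IsOpen V := isOpen_biUnion fun g' _ => isOpen_setOf_isLocalPiece h g'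
  have hdisj : Disjoint {y | IsLocalPiece h g y} V := by
    refine Set.disjoint_left.2 fun y hy hyV => ?_
    obtain ⟨g', hne', hg'⟩ := Set.mem_iUnion₂.1 hyV
    exact hne' (IsLocalPiece.eqUpToSign hy hg')
  have hcover : s ⊆ {y | IsLocalPiece h g y} ∪ V := by
    intro y hy
    obtain ⟨g', -, hg'⟩ := hpiece y hy
    by_cases hgg' : EqUpToSign g g'
    · exact Or.inl (hg'.of_eqUpToSign hgg'.symm)
    · exact Or.inr (Set.mem_iUnion₂.2 ⟨g', hgg', hg'⟩)
  exact ⟨g, hgM, hs.subset_left_of_subset_union (isOpen_setOf_isLocalPiece h g) hV hdisj hcover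
    ⟨y₀, hy₀, hg⟩⟩

lemma IsPiecewiseIn.eventually_nhdsNE {M : Set (SL2 ℝ)} {h : ℝ ≃ₜ ℝ} (hpw : IsPiecewiseIn M h)
    (x : ℝ) : ∀ᶠ y in 𝓝[≠] x, ∃ g ∈ M, IsLocalPiece h g y := by
  obtain ⟨B, hB⟩ := hpw
  filter_upwards [nhdsNE_le_cofinite x B.finite_toSet.compl_mem_cofinite] with y hy using hB y hy

lemma IsPiecewiseIn.exists_eventually_nhdsLT {M : Set (SL2 ℝ)} {h : ℝ ≃ₜ ℝ}
    (hpw : IsPiecewiseIn M h) (x : ℝ) : ∃ g ∈ M, ∀ᶠ y in 𝓝[<] x, IsLocalPiece h g y := by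
  obtain ⟨u, hu, hsub⟩ := mem_nhdsLT_iff_exists_Ioo_subset.1
    (nhdsWithin_mono x (fun _ hy => ne_of_lt hy) (hpw.eventually_nhdsNE x))
  obtain ⟨g, hgM, hg⟩ := isPreconnected_Ioo.exists_isLocalPiece (Set.nonempty_Ioo.2 hu)
    fun y hy => hsub hy
  exact ⟨g, hgM, Filter.mem_of_superset (Ioo_mem_nhdsLT hu) hg⟩

lemma IsPiecewiseIn.exists_eventually_nhdsGT {M : Set (SL2 ℝ)} {h : ℝ ≃ₜ ℝ}
    (hpw : IsPiecewiseIn M h) (x : ℝ) : ∃ g ∈ M, ∀ᶠ y in 𝓝[>] x, IsLocalPiece h g y := by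
  obtain ⟨v, hv, hsub⟩ := mem_nhdsGT_iff_exists_Ioo_subset.1
    (nhdsWithin_mono x (fun _ hy => ne_of_gt hy) (hpw.eventually_nhdsNE x))
  obtain ⟨g, hgM, hg⟩ := isPreconnected_Ioo.exists_isLocalPiece (Set.nonempty_Ioo.2 hv)
    fun y hy => hsub hy
  exact ⟨g, hgM, Filter.mem_of_superset (Ioo_mem_nhdsGT hv) hg⟩

lemma mdenom_ne_zero_and_moebius_eq_of_eventually {h : ℝ ≃ₜ ℝ} {g : SL2 ℝ} {x : ℝ}
    {l : Filter ℝ} [l.NeBot] (hl : l ≤ 𝓝 x) (hev : ∀ᶠ y in l, IsLocalPiece h g y) :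
    mdenom g x ≠ 0 ∧ moebius g x = h x := by
  -- `(c y + d) h y = a y + b` passes to the limit `y → x`; a pole at `x` would then contradict
  -- `det g = 1`.
  set F : ℝ → ℝ := fun y => (g.1 1 0 * y + g.1 1 1) * h y - (g.1 0 0 * y + g.1 0 1)
  have hFl : F =ᶠ[l] 0 := by
    filter_upwards [hev] with y ⟨hd, he⟩
    rw [mdenom] at hd
    simp only [F, he.self_of_nhds, moebius, Pi.zero_apply]
    field_simp
    ring
  have hFx : F x = 0 :=
    tendsto_nhds_unique (((by fun_prop : Continuous F).tendsto x).mono_left hl)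
      (tendsto_const_nhds.congr' hFl.symm)
  have hd : mdenom g x ≠ 0 := by
    intro hd
    rw [mdenom] at hd
    have : (1 : ℝ) = 0 := by
      linear_combination -(det_eq g) + (g.1 0 0 - g.1 1 0 * h x) * hd + g.1 1 0 * hFx
    exact one_ne_zero this
  refine ⟨hd, ?_⟩
  rw [mdenom] at hd
  rw [moebius, div_eq_iff hd]
  linear_combination -hFx

lemma IsBreakpoint.exists_nontrivial_fixing {A : Subring ℝ} {h : ℝ ≃ₜ ℝ} {x : ℝ}
    (hx : IsBreakpoint h x) (hpw : IsPiecewiseIn (entriesIn A) h) :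
    ∃ q ∈ entriesIn A, ¬ (q.1 = 1 ∨ q.1 = -1) ∧ mdenom q x ≠ 0 ∧ moebius q x = x := by
  obtain ⟨g₁, hg₁A, hg₁⟩ := hpw.exists_eventually_nhdsLT x
  obtain ⟨g₂, hg₂A, hg₂⟩ := hpw.exists_eventually_nhdsGT x
  obtain ⟨hd₁, hm₁⟩ := mdenom_ne_zero_and_moebius_eq_of_eventually nhdsWithin_le_nhds hg₁
  obtain ⟨hd₂, hm₂⟩ := mdenom_ne_zero_and_moebius_eq_of_eventually nhdsWithin_le_nhds hg₂
  obtain ⟨hdq, hfix⟩ := inv_mul_fixes_of_moebius_eq hd₁ hd₂ (hm₁.trans hm₂.symm)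
  refine ⟨g₁⁻¹ * g₂, mul_entriesIn (inv_entriesIn hg₁A) hg₂A, fun hq => hx ⟨g₁, hd₁, ?_⟩,
    hdq, hfix⟩
  have he := (eqUpToSign_of_inv_mul hq).moebius_eq
  rw [← nhdsNE_sup_pure, ← nhdsLT_sup_nhdsGT, eventually_sup, eventually_sup, eventually_pure]
  refine ⟨⟨hg₁.mono fun y hy => hy.2.self_of_nhds, hg₂.mono fun y hy => ?_⟩, hm₁.symm⟩
  rw [hy.2.self_of_nhds, he]

lemma eq_div_of_abs_trace_le_two {q : SL2 ℝ} {x : ℝ} (hq : ¬ (q.1 = 1 ∨ q.1 = -1))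
    (hfix : q.1 1 0 * x ^ 2 + (q.1 1 1 - q.1 0 0) * x - q.1 0 1 = 0)
    (htr : |Matrix.trace q.1| ≤ 2) : x = (q.1 0 0 - q.1 1 1) / (2 * q.1 1 0) := by
  rw [Matrix.trace_fin_two, abs_le] at htr
  have hdisc : (2 * q.1 1 0 * x + (q.1 1 1 - q.1 0 0)) ^ 2 = (q.1 0 0 + q.1 1 1) ^ 2 - 4 := by
    linear_combination 4 * q.1 1 0 * hfix - 4 * det_eq q
  have hlin : 2 * q.1 1 0 * x + (q.1 1 1 - q.1 0 0) = 0 := by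
    nlinarith [sq_nonneg (2 * q.1 1 0 * x + (q.1 1 1 - q.1 0 0))]
  have hc : q.1 1 0 ≠ 0 := by
    intro hc
    have had : q.1 0 0 = q.1 1 1 := by rw [hc] at hlin; linarith
    exact hq (coe_eq_one_or_neg_one hc (by rw [hc, had] at hfix; linarith) had)
  field_simp
  linarith

lemma IsBreakpoint.mem_fixHyp {A : Subring ℝ} (hAQ : A ≤ ratSubring)
    (hQ : (ratSubring : Set ℝ) ⊆ FixHyp A) {h : ℝ ≃ₜ ℝ} {x : ℝ} (hx : IsBreakpoint h x)
    (hpw : IsPiecewiseIn (entriesIn A) h) : x ∈ FixHyp A := by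
  obtain ⟨q, hqA, hq, hd, hfix⟩ := hx.exists_nontrivial_fixing hpw
  by_cases htr : 2 < |Matrix.trace q.1|
  · exact ⟨q, hqA, htr, hd, hfix⟩
  rw [eq_div_of_abs_trace_le_two hq (quadratic_eq_zero_of_moebius_eq_self hd hfix)
    (not_lt.1 htr)]
  exact hQ (ratSubring_div_mem (sub_mem (hAQ (hqA 0 0)) (hAQ (hqA 1 1)))
    (mul_mem (ofNat_mem _ 2) (hAQ (hqA 1 0))))

lemma IsPiecewiseIn.locallyIn {A : Subring ℝ} {Φ : Set ℝ} {h : ℝ ≃ₜ ℝ}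
    (hpw : IsPiecewiseIn (entriesIn A) h) (hΦ : ∀ x, IsBreakpoint h x → x ∈ Φ) :
    LocallyIn A Φ h := by
  intro x hx
  obtain ⟨g, hg⟩ := not_not.1 (mt (hΦ x) hx)
  obtain ⟨B, hB⟩ := hpw
  have hU : {y | IsLocalPiece h g y} ∈ 𝓝 x := (isOpen_setOf_isLocalPiece h g).mem_nhds hg
  obtain ⟨y, hy, hyB⟩ := ((infinite_of_mem_nhds x hU).sdiff B.finite_toSet).nonempty
  obtain ⟨g', hg'A, hg'⟩ := hB y hyB
  exact ⟨g', hg'A, hg.of_eqUpToSign (IsLocalPiece.eqUpToSign hy hg')⟩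

lemma zero_mem_fixHyp {A : Subring ℝ} {u : ℝ} (hu : u ∈ A) (hu' : u⁻¹ ∈ A)
    (htr : 2 < |u + u⁻¹|) : (0 : ℝ) ∈ FixHyp A := by
  have hu0 : u ≠ 0 := by rintro rfl; norm_num at htr
  let D : SL2 ℝ := ⟨!![u, 0; 0, u⁻¹], by simp [Matrix.det_fin_two_of, hu0]⟩
  refine ⟨D, ?_, by simpa [D, Matrix.trace_fin_two] using htr, by simp [D, mdenom, hu0],
    by simp [D, moebius]⟩
  intro i j
  fin_cases i <;> fin_cases j <;> simp [D, hu, hu', zero_mem]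

lemma ratSubring_subset_fixHyp {A : Subring ℝ} (h0 : (0 : ℝ) ∈ FixHyp A) :
    (ratSubring : Set ℝ) ⊆ FixHyp A := by
  rintro _ ⟨r, rfl⟩
  obtain ⟨a, b, hab⟩ : IsCoprime r.num r.den := Int.isCoprime_iff_gcd_eq_one.2 r.reduced
  have habR : (a : ℝ) * r.num + b * r.den = 1 := by exact_mod_cast hab
  have hden : (r.den : ℝ) ≠ 0 := Nat.cast_ne_zero.2 r.den_nz
  let γ : SL2 ℝ := ⟨!![(r.den : ℝ), -r.num; a, b], by
    rw [Matrix.det_fin_two_of]; linear_combination habR⟩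
  have hnum : (r.den : ℝ) * r = r.num := by rw [Rat.cast_def]; field_simp
  have hmd : (a : ℝ) * r + b = (r.den : ℝ)⁻¹ := by
    rw [Rat.cast_def]; field_simp; linear_combination habR
  refine FixHyp.conj (g := γ) ?_ ?_ ?_
  · intro i j
    fin_cases i <;> fin_cases j <;> simp [γ, intCast_mem, natCast_mem]
  · simp [mdenom, γ, hmd, hden]
  · simpa [moebius, γ, hnum] using h0

lemma sIntR_le_ratSubring (S : Set ℕ) : SIntR S ≤ ratSubring := by
  refine Subring.closure_le.2 ?_
  rintro _ ⟨p, -, rfl⟩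
  exact ⟨(p : ℚ)⁻¹, by simp⟩

lemma zero_mem_fixHyp_sIntR {S : Set ℕ} (hS : ∀ q ∈ S, Nat.Prime q) (hne : S.Nonempty) :
    (0 : ℝ) ∈ FixHyp (SIntR S) := by
  obtain ⟨p, hp⟩ := hne
  have hp2 : (2 : ℝ) ≤ p := by exact_mod_cast (hS p hp).two_le
  refine zero_mem_fixHyp (natCast_mem _ p) (Subring.subset_closure ⟨p, hp, rfl⟩) ?_
  have : 0 < (p : ℝ)⁻¹ := by positivity
  rw [abs_of_pos (by positivity)]
  linarith

end PP

/-- For a non-empty set `S` of primes, every breakpoint of every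
element of `H(ℝ)` with pieces in `SL₂(ℤ[1/S])` is a fixed point of a hyperbolic
element of `SL₂(ℤ[1/S])`; consequently `Γ_S = H(ℤ[1/S])`. -/
theorem breakpoints_fixed_by_hyperbolic (S : Set ℕ)
    (hS : ∀ q ∈ S, Nat.Prime q) (hne : S.Nonempty) :
    (∀ h : ℝ ≃ₜ ℝ, IsPiecewiseIn (entriesIn (SIntR S)) h →
      ∀ x : ℝ, IsBreakpoint h x → x ∈ FixHyp (SIntR S)) ∧
    Gamma S = HGroup (SIntR S) := by
  have hbreak : ∀ h : ℝ ≃ₜ ℝ, IsPiecewiseIn (entriesIn (SIntR S)) h →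
      ∀ x : ℝ, IsBreakpoint h x → x ∈ FixHyp (SIntR S) := fun h hpw x hx =>
    hx.mem_fixHyp (sIntR_le_ratSubring S)
      (ratSubring_subset_fixHyp (zero_mem_fixHyp_sIntR hS hne)) hpw
  refine ⟨hbreak, le_antisymm (fun h hpw => ?_) fun h hh => hh.1⟩
  have hpw_inv : IsPiecewiseIn (entriesIn (SIntR S)) h⁻¹ := (Gamma S).inv_mem hpw
  exact ⟨hpw, hpw.locallyIn (hbreak h hpw), hpw_inv.locallyIn (hbreak h⁻¹ hpw_inv)⟩
end
end

section
/- Let A < ℝ be a unital subring and let g = (a b; c d) ∈ SL₂(A) with c ≠ 0, and let x ∈ ℝ satisfy g·x ≠ ∞. Then there exists a hyperbolic element q₀ ∈ SL₂(A) with q₀·∞ = g·∞ whose two fixed points ξ₋, ξ₊ lie in ℝ and are such that the open interval of ℝ they determine contains g·x but does not contain g·∞. Explicitly, q₀ may be taken of the form (a, b+na; c, d+nc) for a suitable integer n. -/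
open Matrix Filter Topology MeasureTheory

noncomputable section

open PP

/-! For `q = (a b; c d)` with `c ≠ 0`, the fixed points of `q` are the roots of
`P_q(z) = c z² + (d - a) z - b`, and `c · P_q(z) < 0` exactly on the open interval between them;
such a `z` exists iff the discriminant `tr(q)² - 4` is positive, i.e. iff `q` is hyperbolic.
At the pole `a / c` one always has `c · P_q(a / c) = det q = 1 > 0`, so the pole is never inside.
Replacing `g` by `g Tⁿ` fixes `a, c` and changes `c · P(y)` by `n c (c y - a)`, where
`y = g·x` gives `c y - a = -1 / (c x + d) ≠ 0`; a suitable `n` makes `c · P(y)` negative. -/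

theorem exists_lt_quadratic_eq_mul_sub_mul_sub {a b c : ℝ} (ha : a ≠ 0)
    (hd : 0 < discrim a b c) :
    ∃ r₁ r₂ : ℝ, r₁ < r₂ ∧ ∀ x, a * (x * x) + b * x + c = a * ((x - r₁) * (x - r₂)) := by
  obtain ⟨s, hs0, hs⟩ : ∃ s, 0 < s ∧ discrim a b c = s * s :=
    ⟨√(discrim a b c), Real.sqrt_pos.2 hd, (Real.mul_self_sqrt hd.le).symm⟩
  have h2a : 2 * a ≠ 0 := mul_ne_zero two_ne_zero ha
  have hvieta : ∀ x, a * (x * x) + b * x + c =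
      a * ((x - (-b + s) / (2 * a)) * (x - (-b - s) / (2 * a))) := fun x => by
    rw [discrim] at hs
    field_simp
    linear_combination -hs
  have huv : (-b + s) / (2 * a) ≠ (-b - s) / (2 * a) := by
    rw [Ne, div_left_inj' h2a]
    linarith
  generalize (-b + s) / (2 * a) = u at hvieta huv
  generalize (-b - s) / (2 * a) = v at hvieta huv
  refine ⟨min u v, max u v, min_lt_max.2 huv, fun x => ?_⟩
  rcases le_total u v with h | h
  · rw [min_eq_left h, max_eq_right h, hvieta]
  · rw [min_eq_right h, max_eq_left h, hvieta]
    ring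

theorem discrim_pos_of_mul_quadratic_neg {a b c y : ℝ}
    (hy : a * (a * (y * y) + b * y + c) < 0) : 0 < discrim a b c := by
  rw [discrim]
  nlinarith [sq_nonneg (2 * a * y + b)]

theorem sub_mul_sub_neg_iff_mem_Ioo {r₁ r₂ x : ℝ} (h : r₁ < r₂) :
    (x - r₁) * (x - r₂) < 0 ↔ x ∈ Set.Ioo r₁ r₂ := by
  constructor
  · intro hx
    rcases mul_neg_iff.1 hx with ⟨h₁, h₂⟩ | ⟨h₁, h₂⟩
    · exact ⟨by linarith, by linarith⟩
    · linarith
  · rintro ⟨h₁, h₂⟩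
    exact mul_neg_of_pos_of_neg (by linarith) (by linarith)

theorem exists_int_add_mul_neg (v : ℝ) {u : ℝ} (hu : u ≠ 0) : ∃ n : ℤ, v + n * u < 0 := by
  rcases hu.lt_or_gt with hu | hu
  · obtain ⟨n, hn⟩ := exists_int_gt (-v / u)
    exact ⟨n, by rw [div_lt_iff_of_neg hu] at hn; linarith⟩
  · obtain ⟨n, hn⟩ := exists_int_lt (-v / u)
    exact ⟨n, by rw [lt_div_iff₀ hu] at hn; linarith⟩

namespace PP

/-- `c z² + (d - a) z - b` for `q = (a b; c d)`, written in the shape `discrim` expects. -/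
def fixPoly (q : SL2 ℝ) (z : ℝ) : ℝ := q.1 1 0 * (z * z) + (q.1 1 1 - q.1 0 0) * z + -q.1 0 1

section FixedPoints

variable (q : SL2 ℝ) {z : ℝ}

theorem mdenom_ne_zero_of_fixPoly_eq_zero (h : fixPoly q z = 0) : mdenom q z ≠ 0 := by
  intro h₀
  have hdet := det_eq q
  unfold fixPoly at h
  unfold mdenom at h₀
  have h₁ : q.1 0 0 * z + q.1 0 1 = 0 := by linear_combination z * h₀ - h
  exact one_ne_zero (by linear_combination -hdet + q.1 0 0 * h₀ - q.1 1 0 * h₁ : (1 : ℝ) = 0)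

theorem moebius_eq_self_of_fixPoly_eq_zero (h : fixPoly q z = 0) : moebius q z = z := by
  have h₀ := mdenom_ne_zero_of_fixPoly_eq_zero q h
  unfold mdenom at h₀
  unfold moebius
  rw [div_eq_iff h₀]
  unfold fixPoly at h
  linear_combination -h

theorem mul_fixPoly_div (hc : q.1 1 0 ≠ 0) : q.1 1 0 * fixPoly q (q.1 0 0 / q.1 1 0) = 1 := by
  have := det_eq q
  unfold fixPoly
  field_simp
  linear_combination this

theorem discrim_fixPoly :
    discrim (q.1 1 0) (q.1 1 1 - q.1 0 0) (-q.1 0 1) = Matrix.trace q.1 ^ 2 - 4 := by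
  rw [discrim, Matrix.trace_fin_two]
  linear_combination -4 * det_eq q

theorem two_lt_abs_trace_of_mul_fixPoly_neg (hz : q.1 1 0 * fixPoly q z < 0) :
    2 < |Matrix.trace q.1| := by
  have := discrim_fixPoly q ▸ discrim_pos_of_mul_quadratic_neg hz
  nlinarith [sq_abs (Matrix.trace q.1), abs_nonneg (Matrix.trace q.1)]

theorem exists_fixPoly_eq_zero_of_mul_fixPoly_neg (hc : q.1 1 0 ≠ 0)
    (hz : q.1 1 0 * fixPoly q z < 0) :
    ∃ ξm ξp : ℝ, ξm < ξp ∧ fixPoly q ξm = 0 ∧ fixPoly q ξp = 0 ∧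
      ∀ w, q.1 1 0 * fixPoly q w < 0 ↔ w ∈ Set.Ioo ξm ξp := by
  obtain ⟨ξm, ξp, hlt, hfac⟩ :=
    exists_lt_quadratic_eq_mul_sub_mul_sub hc (discrim_pos_of_mul_quadratic_neg hz)
  have hfix : ∀ w, fixPoly q w = q.1 1 0 * ((w - ξm) * (w - ξp)) := hfac
  refine ⟨ξm, ξp, hlt, by simp [hfix], by simp [hfix], fun w => ?_⟩
  rw [hfix, ← mul_assoc, ← sub_mul_sub_neg_iff_mem_Ioo hlt]
  have hc2 : 0 < q.1 1 0 * q.1 1 0 := mul_self_pos.2 hc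
  exact ⟨fun h => neg_of_mul_neg_right h hc2.le, mul_neg_of_pos_of_neg hc2⟩

end FixedPoints

theorem mul_moebius_sub_mul_mdenom_eq_neg_one (g : SL2 ℝ) {x : ℝ} (hx : mdenom g x ≠ 0) :
    (g.1 1 0 * moebius g x - g.1 0 0) * mdenom g x = -1 := by
  have := det_eq g
  unfold moebius
  unfold mdenom at hx ⊢
  field_simp
  linear_combination -this

def colOp (g : SL2 ℝ) (n : ℤ) : SL2 ℝ := g * ((ModularGroup.T ^ n : SL2 ℤ) : SL2 ℝ)

section ColOp

variable (g : SL2 ℝ) (n : ℤ)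

theorem coe_colOp : (colOp g n : Matrix (Fin 2) (Fin 2) ℝ) =
    !![g.1 0 0, g.1 0 1 + (n : ℝ) * g.1 0 0; g.1 1 0, g.1 1 1 + (n : ℝ) * g.1 1 0] := by
  rw [colOp, Matrix.SpecialLinearGroup.coe_mul, Matrix.SpecialLinearGroup.coe_matrix_coe,
    ModularGroup.coe_T_zpow]
  ext i j
  fin_cases i <;> fin_cases j <;> simp [Matrix.mul_apply, Fin.sum_univ_two] <;> ring

theorem colOp_mem_entriesIn {A : Subring ℝ} (hg : g ∈ entriesIn A) : colOp g n ∈ entriesIn A :=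
  mul_entriesIn hg fun i j => by
    rw [Matrix.SpecialLinearGroup.coe_matrix_coe]
    exact intCast_mem A _

theorem colOp_apply_zero_zero : (colOp g n).1 0 0 = g.1 0 0 := by simp [coe_colOp]

theorem colOp_apply_one_zero : (colOp g n).1 1 0 = g.1 1 0 := by simp [coe_colOp]

theorem fixPoly_colOp (z : ℝ) :
    fixPoly (colOp g n) z = fixPoly g z + n * (g.1 1 0 * z - g.1 0 0) := by
  simp only [fixPoly, coe_colOp, Matrix.of_apply, Matrix.cons_val', Matrix.cons_val_zero,
    Matrix.cons_val_one, Matrix.empty_val', Matrix.cons_val_fin_one]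
  ring

end ColOp

end PP

/-- Let `A < ℝ` be a unital subring, `g = (a b; c d) ∈ SL₂(A)` with
`c ≠ 0`, and `x ∈ ℝ` with `g·x ≠ ∞`. Then some column operation `q₀ = (a, b+na; c, d+nc)`,
`n ∈ ℤ`, is a hyperbolic element of `SL₂(A)` with `q₀·∞ = g·∞` whose two fixed points
`ξ₋ < ξ₊` are real and such that the open interval `(ξ₋, ξ₊)` contains `g·x` but not
`g·∞ = a/c`. -/
theorem column_trick (A : Subring ℝ) (g : SL2 ℝ) (hg : g ∈ entriesIn A)
    (hc : g.1 1 0 ≠ 0) (x : ℝ) (hx : mdenom g x ≠ 0) :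
    ∃ (n : ℤ) (q₀ : SL2 ℝ),
      (q₀ : Matrix (Fin 2) (Fin 2) ℝ) =
        !![g.1 0 0, g.1 0 1 + (n : ℝ) * g.1 0 0;
           g.1 1 0, g.1 1 1 + (n : ℝ) * g.1 1 0] ∧
      q₀ ∈ entriesIn A ∧
      |Matrix.trace (q₀ : Matrix (Fin 2) (Fin 2) ℝ)| > 2 ∧
      ∃ ξm ξp : ℝ, ξm < ξp ∧
        mdenom q₀ ξm ≠ 0 ∧ moebius q₀ ξm = ξm ∧
        mdenom q₀ ξp ≠ 0 ∧ moebius q₀ ξp = ξp ∧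
        moebius g x ∈ Set.Ioo ξm ξp ∧
        g.1 0 0 / g.1 1 0 ∉ Set.Ioo ξm ξp := by
  set y := moebius g x
  have hslope : g.1 1 0 * (g.1 1 0 * y - g.1 0 0) ≠ 0 := by
    refine mul_ne_zero hc (left_ne_zero_of_mul (b := mdenom g x) ?_)
    rw [mul_moebius_sub_mul_mdenom_eq_neg_one g hx]
    exact neg_ne_zero.2 one_ne_zero
  obtain ⟨n, hn⟩ := exists_int_add_mul_neg (g.1 1 0 * fixPoly g y) hslope
  have hy : (colOp g n).1 1 0 * fixPoly (colOp g n) y < 0 := by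
    rw [colOp_apply_one_zero, fixPoly_colOp]
    linear_combination hn
  have hc' : (colOp g n).1 1 0 ≠ 0 := by rwa [colOp_apply_one_zero]
  obtain ⟨ξm, ξp, hlt, hm, hp, hIoo⟩ := exists_fixPoly_eq_zero_of_mul_fixPoly_neg _ hc' hy
  refine ⟨n, colOp g n, coe_colOp g n, colOp_mem_entriesIn g n hg,
    two_lt_abs_trace_of_mul_fixPoly_neg _ hy, ξm, ξp, hlt,
    mdenom_ne_zero_of_fixPoly_eq_zero _ hm, moebius_eq_self_of_fixPoly_eq_zero _ hm,
    mdenom_ne_zero_of_fixPoly_eq_zero _ hp, moebius_eq_self_of_fixPoly_eq_zero _ hp,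
    (hIoo y).1 hy, fun hpole => ?_⟩
  rw [← colOp_apply_zero_zero g n, ← colOp_apply_one_zero g n, ← hIoo,
    mul_fixPoly_div _ hc'] at hpole
  exact zero_lt_one.not_gt hpole
end
end

section
/- Let G be a discrete group and G₁, G₂ < G subgroups. Then G₁ is co-amenable to G₂ relative to G (every convex compact G-space with a G₁-fixed point has a G₂-fixed point) if and only if the G₂-action on the coset space G/G₁ admits an invariant mean on ℓ∞(G/G₁). -/
open Matrix Filter Topology MeasureTheory

noncomputable section

open PP

namespace PP

/-- `G₁` is co-amenable to `G₂` relative to `G`: every convex compact `G`-space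
(a convex compact subset of a locally convex Hausdorff real topological vector space
on which `G` acts by affine homeomorphisms) with a `G₁`-fixed point has a
`G₂`-fixed point. -/
def RelCoAmenable (G : Type u) [Group G] (G₁ G₂ : Subgroup G) : Prop :=
  ∀ (E : Type u) [AddCommGroup E] [Module ℝ E] [TopologicalSpace E]
    [IsTopologicalAddGroup E] [ContinuousSMul ℝ E] [LocallyConvexSpace ℝ E] [T2Space E]
    (K : Set E) (_ : IsCompact K) (hconv : Convex ℝ K)
    (act : G → K → K)
    (_ : ∀ x, act 1 x = x)
    (_ : ∀ g g' x, act (g * g') x = act g (act g' x))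
    (_ : ∀ g, Continuous (act g))
    (_ : ∀ (g : G) (x y : K) (t : ℝ) (ht₀ : 0 ≤ t) (ht₁ : t ≤ 1),
      (act g ⟨t • (x : E) + (1 - t) • (y : E),
        hconv x.2 y.2 ht₀ (by linarith) (by ring)⟩ : E)
        = t • (act g x : E) + (1 - t) • (act g y : E)),
    (∃ x, ∀ h ∈ G₁, act h x = x) → ∃ x, ∀ h ∈ G₂, act h x = x

end PP

/-
If `G₁` fixes `x₀ ∈ K`, the orbit map `φ : gG₁ ↦ g • x₀` is `G`-equivariant, and a
`G₂`-invariant mean `m` on `G/G₁` pushes forward along it to a barycenter `b ∈ K`, a point with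
`u b = m (u ∘ φ)` for every continuous affine `u : K → ℝ`. It exists by compactness of `K`, the
finite case being Hahn–Banach separation in `ℝⁿ`. Testing `b` against `ℓ ∘ g` for `g ∈ G₂` and
continuous linear `ℓ` shows that `b` is `G₂`-fixed, as the dual of `E` separates points.

Conversely, the means on `G/G₁`, extended by `0` to unbounded functions, form a compact convex
subset of `(G/G₁ → ℝ) → ℝ` with the product topology, on which `G` acts by translation. The Dirac
mean at the trivial coset is `G₁`-fixed, and a `G₂`-fixed point is a `G₂`-invariant mean.
-/

namespace PP

variable {X : Type*}

namespace Bdd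

lemma const (c : ℝ) : Bdd (fun _ : X => c) := ⟨|c|, fun _ => le_rfl⟩

lemma add {f g : X → ℝ} (hf : Bdd f) (hg : Bdd g) : Bdd (f + g) := by
  obtain ⟨C, hC⟩ := hf
  obtain ⟨D, hD⟩ := hg
  exact ⟨C + D, fun x => (abs_add_le _ _).trans (add_le_add (hC x) (hD x))⟩

lemma const_smul {f : X → ℝ} (hf : Bdd f) (c : ℝ) : Bdd (c • f) := by
  obtain ⟨C, hC⟩ := hf
  refine ⟨|c| * C, fun x => ?_⟩
  rw [Pi.smul_apply, smul_eq_mul, abs_mul]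
  exact mul_le_mul_of_nonneg_left (hC x) (abs_nonneg c)

lemma sum {ι : Type*} (s : Finset ι) {f : ι → X → ℝ} (hf : ∀ i ∈ s, Bdd (f i)) :
    Bdd (∑ i ∈ s, f i) :=
  Finset.sum_induction f Bdd (fun _ _ => add) (const 0) hf

lemma comp_smul_iff {G : Type*} [Group G] [MulAction G X] (g : G) {f : X → ℝ} :
    Bdd (fun x => f (g • x)) ↔ Bdd f := by
  refine ⟨fun ⟨C, hC⟩ => ⟨C, fun x => ?_⟩, fun ⟨C, hC⟩ => ⟨C, fun x => hC _⟩⟩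
  simpa using hC (g⁻¹ • x)

lemma comp_of_continuous {Y : Type*} [TopologicalSpace Y] [CompactSpace Y] {u : Y → ℝ}
    (hu : Continuous u) (φ : X → Y) : Bdd (u ∘ φ) := by
  obtain ⟨C, hC⟩ := isCompact_univ.exists_bound_of_continuousOn hu.continuousOn
  exact ⟨C, fun x => hC (φ x) (Set.mem_univ _)⟩

end Bdd

namespace MeanOn

variable (m : MeanOn X)

lemma map_const (c : ℝ) : m.toFun (fun _ => c) = c := by
  calc m.toFun (fun _ => c) = m.toFun (c • fun _ => 1) := by congr 1; ext; simp
    _ = c := by rw [m.smul' c _ (Bdd.const 1), m.one', mul_one]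

lemma map_sum {ι : Type*} (s : Finset ι) {f : ι → X → ℝ} (hf : ∀ i ∈ s, Bdd (f i)) :
    m.toFun (∑ i ∈ s, f i) = ∑ i ∈ s, m.toFun (f i) := by
  classical
  induction s using Finset.induction_on with
  | empty => exact m.map_const 0
  | insert a s ha ih =>
    have hs : ∀ i ∈ s, Bdd (f i) := fun i hi => hf i (Finset.mem_insert_of_mem hi)
    rw [Finset.sum_insert ha, Finset.sum_insert ha,
      m.add' _ _ (hf a (Finset.mem_insert_self a s)) (Bdd.sum s hs), ih hs]

lemma map_le_const {f : X → ℝ} (hf : Bdd f) {c : ℝ} (h : ∀ x, f x ≤ c) : m.toFun f ≤ c :=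
  m.map_const c ▸ m.mono' f _ hf (Bdd.const c) h

lemma abs_map_le {f : X → ℝ} (hf : Bdd f) {c : ℝ} (h : ∀ x, |f x| ≤ c) : |m.toFun f| ≤ c := by
  refine abs_le.mpr ⟨?_, m.map_le_const hf fun x => (abs_le.mp (h x)).2⟩
  exact m.map_const (-c) ▸ m.mono' _ f (Bdd.const _) hf fun x => (abs_le.mp (h x)).1

lemma map_linearMap_comp {ι : Type*} [Fintype ι] (f : (ι → ℝ) →ₗ[ℝ] ℝ) {F : X → ι → ℝ}
    (hF : ∀ i, Bdd fun x => F x i) :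
    m.toFun (fun x => f (F x)) = f (fun i => m.toFun fun x => F x i) := by
  classical
  have hfF : (fun x => f (F x)) = ∑ i, f (fun j => if i = j then 1 else 0) • fun x => F x i := by
    ext x
    rw [Finset.sum_apply, f.pi_apply_eq_sum_univ (F x)]
    exact Finset.sum_congr rfl fun i _ => mul_comm _ _
  rw [hfF, m.map_sum _ fun i _ => (hF i).const_smul _, f.pi_apply_eq_sum_univ]
  exact Finset.sum_congr rfl fun i _ => (m.smul' _ _ (hF i)).trans (mul_comm _ _)

end MeanOn

section Barycenter

variable {E F : Type*} [AddCommGroup E] [Module ℝ E] [AddCommGroup F] [Module ℝ F] {K : Set E}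

def IsAffine (f : K → F) : Prop :=
  ∀ (x y z : K) (t : ℝ), 0 ≤ t → t ≤ 1 → (z : E) = t • (x : E) + (1 - t) • (y : E) →
    f z = t • f x + (1 - t) • f y

lemma isAffine_coe : IsAffine (fun k : K => (k : E)) := fun _ _ _ _ _ _ hz => hz

lemma IsAffine.linearMap_comp {F' : Type*} [AddCommGroup F'] [Module ℝ F'] {f : K → F}
    (hf : IsAffine f) (ℓ : F →ₗ[ℝ] F') : IsAffine (ℓ ∘ f) := by
  intro x y z t h₀ h₁ hz
  simp [hf x y z t h₀ h₁ hz]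

lemma isAffine_pi {ι : Type*} {f : K → ι → ℝ} (hf : ∀ i, IsAffine fun k => f k i) :
    IsAffine f := fun x y z t h₀ h₁ hz => funext fun i => hf i x y z t h₀ h₁ hz

lemma IsAffine.convex_range (hK : Convex ℝ K) {f : K → F} (hf : IsAffine f) :
    Convex ℝ (Set.range f) := by
  rintro _ ⟨x, rfl⟩ _ ⟨y, rfl⟩ a b ha hb hab
  obtain rfl : b = 1 - a := by linarith
  exact ⟨⟨a • (x : E) + (1 - a) • (y : E), hK x.2 y.2 ha hb hab⟩,
    hf x y _ a ha (by linarith) rfl⟩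

variable [TopologicalSpace E]

lemma exists_apply_eq_mean {ι : Type*} [Fintype ι] (hK : IsCompact K) (hconv : Convex ℝ K)
    (m : MeanOn X) (φ : X → K) {U : K → ι → ℝ} (hUc : Continuous U) (hUa : IsAffine U) :
    ∃ k, U k = fun i => m.toFun fun x => U (φ x) i := by
  have := isCompact_iff_compactSpace.mp hK
  by_contra! hv
  obtain ⟨f, c, hfU, hfv⟩ := geometric_hahn_banach_closed_point (hUa.convex_range hconv)
    (isCompact_range hUc).isClosed (fun ⟨k, hk⟩ => hv k hk)
  have hbdd (i : ι) : Bdd fun x => U (φ x) i :=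
    Bdd.comp_of_continuous ((continuous_apply i).comp hUc) φ
  have hle : m.toFun (fun x => (f : (ι → ℝ) →ₗ[ℝ] ℝ) (U (φ x))) ≤ c :=
    m.map_le_const (Bdd.comp_of_continuous (f.continuous.comp hUc) φ)
      fun x => (hfU _ ⟨φ x, rfl⟩).le
  rw [m.map_linearMap_comp _ hbdd] at hle
  exact absurd hle (not_le.mpr hfv)

theorem exists_barycenter (hK : IsCompact K) (hconv : Convex ℝ K) (m : MeanOn X) (φ : X → K) :
    ∃ b : K, ∀ u : K → ℝ, Continuous u → IsAffine u → u b = m.toFun (u ∘ φ) := by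
  have := isCompact_iff_compactSpace.mp hK
  obtain ⟨b, -, hb⟩ := isCompact_univ.inter_iInter_nonempty
    (fun u : {u : K → ℝ // Continuous u ∧ IsAffine u} => {k | u.1 k = m.toFun (u.1 ∘ φ)})
    (fun u => isClosed_eq u.2.1 continuous_const) fun t => by
      obtain ⟨k, hk⟩ := exists_apply_eq_mean hK hconv m φ
        (U := fun k (u : t) => u.1.1 k) (continuous_pi fun u => u.1.2.1)
        (isAffine_pi fun u => u.1.2.2)
      exact ⟨k, trivial, Set.mem_iInter₂.mpr fun u hu => congrFun hk ⟨u, hu⟩⟩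
  exact ⟨b, fun u hc ha => Set.mem_iInter.mp hb ⟨u, hc, ha⟩⟩

end Barycenter

section MeanSet

variable (X) in
/-- Means on `X`, extended by `0` to unbounded functions so that they form a compact set. -/
def meanSet : Set ((X → ℝ) → ℝ) :=
  {μ | (∀ f g, Bdd f → Bdd g → μ (f + g) = μ f + μ g) ∧
    (∀ (c : ℝ) f, Bdd f → μ (c • f) = c * μ f) ∧
    (∀ f g, Bdd f → Bdd g → (∀ x, f x ≤ g x) → μ f ≤ μ g) ∧
    μ (fun _ => 1) = 1 ∧
    ∀ f, ¬ Bdd f → μ f = 0}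

def MeanOn.ofMemMeanSet {μ : (X → ℝ) → ℝ} (hμ : μ ∈ meanSet X) : MeanOn X :=
  ⟨μ, hμ.1, hμ.2.1, hμ.2.2.1, hμ.2.2.2.1⟩

variable (X) in
lemma isClosed_meanSet : IsClosed (meanSet X) := by
  simp only [meanSet, Set.ofPred_and, Set.ofPred_forall]
  refine .inter ?_ (.inter ?_ (.inter ?_ (.inter ?_ ?_))) <;>
    repeat' first
      | exact isClosed_eq (by fun_prop) (by fun_prop)
      | exact isClosed_le (by fun_prop) (by fun_prop)
      | (apply isClosed_iInter; intro _)

variable (X) in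
lemma convex_meanSet : Convex ℝ (meanSet X) := by
  rintro μ ⟨hadd, hsmul, hmono, hone, hzero⟩ ν ⟨hadd', hsmul', hmono', hone', hzero'⟩
    a b ha hb hab
  refine ⟨fun f g hf hg => ?_, fun c f hf => ?_, fun f g hf hg hfg => ?_, ?_, fun f hf => ?_⟩ <;>
    simp only [Pi.add_apply, Pi.smul_apply, smul_eq_mul]
  · rw [hadd f g hf hg, hadd' f g hf hg]; ring
  · rw [hsmul c f hf, hsmul' c f hf]; ring
  · exact add_le_add (mul_le_mul_of_nonneg_left (hmono f g hf hg hfg) ha)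
      (mul_le_mul_of_nonneg_left (hmono' f g hf hg hfg) hb)
  · rw [hone, hone', mul_one, mul_one, hab]
  · rw [hzero f hf, hzero' f hf, mul_zero, mul_zero, add_zero]

lemma abs_le_iSup_of_mem_meanSet {μ : (X → ℝ) → ℝ} (hμ : μ ∈ meanSet X) (f : X → ℝ) :
    |μ f| ≤ ⨆ x, |f x| := by
  by_cases hf : Bdd f
  · obtain ⟨C, hC⟩ := hf
    have hbdd : BddAbove (Set.range fun x => |f x|) := ⟨C, Set.forall_mem_range.mpr hC⟩
    exact (MeanOn.ofMemMeanSet hμ).abs_map_le ⟨C, hC⟩ fun x => le_ciSup hbdd x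
  · rw [hμ.2.2.2.2 f hf, abs_zero]
    exact Real.iSup_nonneg fun x => abs_nonneg (f x)

variable (X) in
lemma isCompact_meanSet : IsCompact (meanSet X) :=
  (isCompact_univ_pi fun f : X → ℝ => isCompact_Icc (a := -⨆ x, |f x|) (b := ⨆ x, |f x|))
    |>.of_isClosed_subset (isClosed_meanSet X)
      fun _ hμ f _ => abs_le.mp (abs_le_iSup_of_mem_meanSet hμ f)

variable {G : Type*} [Group G] [MulAction G X]

def translate (g : G) (μ : (X → ℝ) → ℝ) : (X → ℝ) → ℝ := fun f => μ fun x => f (g • x)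

lemma translate_one (μ : (X → ℝ) → ℝ) : translate (1 : G) μ = μ := by
  ext f
  simp [translate]

lemma translate_mul (g g' : G) (μ : (X → ℝ) → ℝ) :
    translate (g * g') μ = translate g (translate g' μ) := by
  ext f
  simp [translate, mul_smul]

lemma continuous_translate (g : G) : Continuous (translate (X := X) g) :=
  continuous_pi fun _ => continuous_apply _

lemma translate_mem_meanSet (g : G) {μ : (X → ℝ) → ℝ} (hμ : μ ∈ meanSet X) :
    translate g μ ∈ meanSet X := by
  obtain ⟨hadd, hsmul, hmono, hone, hzero⟩ := hμ
  refine ⟨fun f f' hf hf' => ?_, fun c f hf => ?_, fun f f' hf hf' hff' => ?_, hone,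
    fun f hf => hzero _ ((Bdd.comp_smul_iff g).not.mpr hf)⟩
  · exact hadd _ _ ((Bdd.comp_smul_iff g).mpr hf) ((Bdd.comp_smul_iff g).mpr hf')
  · exact hsmul c _ ((Bdd.comp_smul_iff g).mpr hf)
  · exact hmono _ _ ((Bdd.comp_smul_iff g).mpr hf) ((Bdd.comp_smul_iff g).mpr hf')
      fun x => hff' (g • x)

open Classical in
def diracMean (x : X) : (X → ℝ) → ℝ := fun f => if Bdd f then f x else 0

lemma diracMean_mem_meanSet (x : X) : diracMean x ∈ meanSet X := by
  refine ⟨fun f g hf hg => ?_, fun c f hf => ?_, fun f g hf hg hfg => ?_, ?_,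
    fun f hf => if_neg hf⟩
  · simp [diracMean, hf, hg, hf.add hg]
  · simp [diracMean, hf, hf.const_smul c]
  · simp [diracMean, hf, hg, hfg x]
  · simp [diracMean, Bdd.const]

lemma translate_diracMean (g : G) (x : X) : translate g (diracMean x) = diracMean (g • x) := by
  classical
  ext f
  exact if_congr (Bdd.comp_smul_iff g) rfl rfl

end MeanSet

theorem exists_invariant_mean_of_relCoAmenable {G : Type u} [Group G] {G₁ G₂ : Subgroup G}
    (h : RelCoAmenable G G₁ G₂) :
    ∃ m : MeanOn (G ⧸ G₁), ∀ (g : G₂) (f : (G ⧸ G₁) → ℝ), Bdd f →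
      m.toFun (fun x => f ((g : G) • x)) = m.toFun f := by
  have hcoset (k : G) (hk : k ∈ G₁) : k • ((1 : G) : G ⧸ G₁) = (1 : G) := by
    rwa [← MulAction.mem_stabilizer_iff, MulAction.stabilizer_quotient]
  obtain ⟨⟨μ, hμ⟩, hfix⟩ := h _ (meanSet (G ⧸ G₁)) (isCompact_meanSet _) (convex_meanSet _)
    (fun g μ => ⟨translate g μ.1, translate_mem_meanSet g μ.2⟩)
    (fun μ => Subtype.ext (translate_one μ.1))
    (fun g g' μ => Subtype.ext (translate_mul g g' μ.1))
    (fun g => ((continuous_translate g).comp continuous_subtype_val).subtype_mk _)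
    (fun g x y t _ _ => rfl)
    ⟨⟨_, diracMean_mem_meanSet ((1 : G) : G ⧸ G₁)⟩, fun k hk => by
      simp [translate_diracMean, hcoset k hk]⟩
  exact ⟨.ofMemMeanSet hμ, fun g f _ => congrFun (congrArg Subtype.val (hfix g g.2)) f⟩

theorem relCoAmenable_of_invariant_mean {G : Type u} [Group G] {G₁ G₂ : Subgroup G}
    (m : MeanOn (G ⧸ G₁))
    (hm : ∀ (g : G₂) (f : (G ⧸ G₁) → ℝ), Bdd f →
      m.toFun (fun x => f ((g : G) • x)) = m.toFun f) :
    RelCoAmenable G G₁ G₂ := by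
  intro E _ _ _ _ _ _ _ K hK hconv act hone hmul hcont haff ⟨x₀, hx₀⟩
  let _ : MulAction G K := { smul := act, one_smul := hone, mul_smul := hmul }
  let φ : G ⧸ G₁ → K := MulAction.ofQuotientStabilizer G x₀ ∘ Subgroup.quotientMapOfLE hx₀
  have hφ (g : G) (q : G ⧸ G₁) : φ (g • q) = act g (φ q) := by
    induction q using QuotientGroup.induction_on
    exact hmul _ _ _
  have haffine (ℓ : E →L[ℝ] ℝ) (g : G) : IsAffine fun k => ℓ (act g k) := by
    refine IsAffine.linearMap_comp (fun x y z t h₀ h₁ hz => ?_) (ℓ : E →ₗ[ℝ] ℝ)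
    obtain rfl : z = ⟨_, hconv x.2 y.2 h₀ (by linarith) (by ring)⟩ := Subtype.ext hz
    exact haff g x y t h₀ h₁
  have := isCompact_iff_compactSpace.mp hK
  obtain ⟨b, hb⟩ := exists_barycenter hK hconv m φ
  refine ⟨b, fun g hg => Subtype.ext <| (SeparatingDual.eq_iff_forall_dual_eq (R := ℝ)).mpr
    fun ℓ => ?_⟩
  calc ℓ (act g b) = m.toFun fun q => ℓ (act g (φ q)) := hb _ (by fun_prop) (haffine ℓ g)
    _ = m.toFun fun q => ℓ (φ q) := by
      simp only [← hφ]
      exact hm ⟨g, hg⟩ _ (Bdd.comp_of_continuous (u := fun k : K => ℓ k) (by fun_prop) φ)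
    _ = ℓ b :=
      (hb (fun k => ℓ k) (by fun_prop) (isAffine_coe.linearMap_comp (ℓ : E →ₗ[ℝ] ℝ))).symm

end PP

/-- For subgroups `G₁, G₂` of a discrete group `G`, `G₁` is
co-amenable to `G₂` relative to `G` (every convex compact `G`-space with a
`G₁`-fixed point has a `G₂`-fixed point) if and only if the `G₂`-action on `G/G₁`
admits an invariant mean. -/
theorem relCoAmenable_iff_invariant_mean (G : Type u) [Group G] (G₁ G₂ : Subgroup G) :
    RelCoAmenable G G₁ G₂ ↔
    ∃ m : MeanOn (G ⧸ G₁), ∀ (g : G₂) (f : (G ⧸ G₁) → ℝ), Bdd f →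
      m.toFun (fun x => f ((g : G) • x)) = m.toFun f :=
  ⟨exists_invariant_mean_of_relCoAmenable, fun ⟨m, hm⟩ => relCoAmenable_of_invariant_mean m hm⟩
end
end
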